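/- Let f be C^{m+1} on an interval containing pairwise distinct points x₀, …, x_m with h = max_j |x_j - x₀|, and let w₀, …, w_m be the weights satisfying ∑_j (x_j - x₀)^r w_j = k!·δ_{rk} for r ≤ m. Then |f^{(k)}(x₀) - ∑_j w_j f(x_j)| ≤ (sup |f^{(m+1)}| / (m+1)!) · ∑_j |w_j| · h^{m+1}; in particular, if ∑_j |w_j| = O(h^{-k}), the stencil error is O(h^{m+1-k}). -/

import Mathlib

open Set Finset

lemma taylor_bound_right {f : ℝ → ℝ} {a b : ℝ} (hab : a < b) {n : ℕ}
    (hf : ContDiffOn ℝ (n + 1 : ℕ) f (Icc a b)) {M : ℝ}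
    (hM : ∀ t ∈ Icc a b, |iteratedDerivWithin (n + 1) f (Icc a b) t| ≤ M)
    {c y : ℝ} (hc : c ∈ Icc a b) (hy : y ∈ Icc a b) (hcy : c ≤ y) :
    |f y - taylorWithinEval f n (Icc a b) c y| ≤
      M / (n + 1).factorial * (y - c) ^ (n + 1) := by
  have hfd : DifferentiableOn ℝ (iteratedDerivWithin n f (Icc a b)) (Icc a b) :=
    hf.differentiableOn_iteratedDerivWithin (by exact_mod_cast n.lt_succ_self)
      (uniqueDiffOn_Icc hab)
  set g : ℝ → ℝ := fun t => taylorWithinEval f n (Icc a b) t y with hg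
  have gderiv : ∀ t ∈ Icc a b, HasDerivWithinAt g
      (((n.factorial : ℝ)⁻¹ * (y - t) ^ n) • iteratedDerivWithin (n + 1) f (Icc a b) t)
      (Icc a b) t := fun t ht =>
    hasDerivWithinAt_taylorWithinEval_at_Icc y hab ht hf.of_succ hfd
  have hsub : Icc c y ⊆ Icc a b := Icc_subset_Icc hc.1 hy.2
  have Fcont : ContinuousOn (fun t => g t - g c) (Icc c y) :=
    ((continuousOn_taylorWithinEval (uniqueDiffOn_Icc hab) hf.of_succ).mono hsub).sub
      continuousOn_const
  have Fderiv : ∀ t ∈ Ico c y, HasDerivWithinAt (fun t => g t - g c)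
      (((n.factorial : ℝ)⁻¹ * (y - t) ^ n) • iteratedDerivWithin (n + 1) f (Icc a b) t)
      (Ici t) t := by
    intro t ht
    have htab : t ∈ Icc a b := ⟨hc.1.trans ht.1, ht.2.le.trans hy.2⟩
    have hmem : Icc a b ∈ nhdsWithin t (Ici t) := by
      have h1 : Iio b ∈ nhds t := Iio_mem_nhds (lt_of_lt_of_le ht.2 hy.2)
      have h2 : Ici t ∩ Iio b ⊆ Icc a b := fun z hz =>
        ⟨htab.1.trans hz.1, hz.2.le⟩
      exact Filter.mem_of_superset
        (Filter.inter_mem self_mem_nhdsWithin (mem_nhdsWithin_of_mem_nhds h1)) h2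
    exact ((gderiv t htab).mono_of_mem_nhdsWithin hmem).sub_const _
  have hB : ∀ t : ℝ, HasDerivAt
      (fun t => M / (n + 1).factorial * (y - c) ^ (n + 1)
        - M / (n + 1).factorial * (y - t) ^ (n + 1))
      (M / n.factorial * (y - t) ^ n) t := by
    intro t
    have h1 : HasDerivAt (fun z : ℝ => (y - z) ^ (n + 1)) (-(n + 1) * (y - t) ^ n) t :=
      monomial_has_deriv_aux t y n
    have h2 := (h1.const_mul (M / (n + 1).factorial)).const_sub
      (M / (n + 1).factorial * (y - c) ^ (n + 1))
    refine h2.congr_deriv ?_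
    have : ((n + 1).factorial : ℝ) = (n + 1) * n.factorial := by
      push_cast [Nat.factorial_succ]; ring
    rw [this]
    have hn : (n.factorial : ℝ) ≠ 0 := Nat.cast_ne_zero.2 n.factorial_ne_zero
    field_simp
  have bound : ∀ t ∈ Ico c y,
      ‖((n.factorial : ℝ)⁻¹ * (y - t) ^ n) • iteratedDerivWithin (n + 1) f (Icc a b) t‖ ≤
        M / n.factorial * (y - t) ^ n := by
    intro t ht
    have htab : t ∈ Icc a b := ⟨hc.1.trans ht.1, ht.2.le.trans hy.2⟩
    have hyt : (0:ℝ) ≤ y - t := sub_nonneg.2 ht.2.le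
    rw [norm_smul, Real.norm_eq_abs, Real.norm_eq_abs,
      abs_of_nonneg (by positivity : (0:ℝ) ≤ (n.factorial : ℝ)⁻¹ * (y - t) ^ n)]
    calc (n.factorial : ℝ)⁻¹ * (y - t) ^ n * |iteratedDerivWithin (n + 1) f (Icc a b) t|
        ≤ (n.factorial : ℝ)⁻¹ * (y - t) ^ n * M :=
          mul_le_mul_of_nonneg_left (hM t htab) (by positivity)
      _ = M / n.factorial * (y - t) ^ n := by ring
  have Fa : ‖(fun t => g t - g c) c‖ ≤ M / (n + 1).factorial * (y - c) ^ (n + 1)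
        - M / (n + 1).factorial * (y - c) ^ (n + 1) := by simp
  have key := image_norm_le_of_norm_deriv_right_le_deriv_boundary Fcont Fderiv Fa hB bound
    (right_mem_Icc.2 hcy)
  simp only [hg, taylorWithinEval_self] at key
  rw [Real.norm_eq_abs] at key
  calc |f y - taylorWithinEval f n (Icc a b) c y|
      ≤ M / (n + 1).factorial * (y - c) ^ (n + 1)
        - M / (n + 1).factorial * (y - y) ^ (n + 1) := key
    _ = M / (n + 1).factorial * (y - c) ^ (n + 1) := by simp

lemma taylor_bound_left {f : ℝ → ℝ} {a b : ℝ} (hab : a < b) {n : ℕ}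
    (hf : ContDiffOn ℝ (n + 1 : ℕ) f (Icc a b)) {M : ℝ}
    (hM : ∀ t ∈ Icc a b, |iteratedDerivWithin (n + 1) f (Icc a b) t| ≤ M)
    {c y : ℝ} (hc : c ∈ Icc a b) (hy : y ∈ Icc a b) (hcy : y ≤ c) :
    |f y - taylorWithinEval f n (Icc a b) c y| ≤
      M / (n + 1).factorial * (c - y) ^ (n + 1) := by
  have hfd : DifferentiableOn ℝ (iteratedDerivWithin n f (Icc a b)) (Icc a b) :=
    hf.differentiableOn_iteratedDerivWithin (by exact_mod_cast n.lt_succ_self)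
      (uniqueDiffOn_Icc hab)
  set g : ℝ → ℝ := fun t => taylorWithinEval f n (Icc a b) t y with hg
  have gderiv : ∀ t ∈ Icc a b, HasDerivWithinAt g
      (((n.factorial : ℝ)⁻¹ * (y - t) ^ n) • iteratedDerivWithin (n + 1) f (Icc a b) t)
      (Icc a b) t := fun t ht =>
    hasDerivWithinAt_taylorWithinEval_at_Icc y hab ht hf.of_succ hfd
  have hsub : Icc y c ⊆ Icc a b := Icc_subset_Icc hy.1 hc.2
  have Fcont : ContinuousOn (fun t => g t - g y) (Icc y c) :=
    ((continuousOn_taylorWithinEval (uniqueDiffOn_Icc hab) hf.of_succ).mono hsub).sub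
      continuousOn_const
  have Fderiv : ∀ t ∈ Ico y c, HasDerivWithinAt (fun t => g t - g y)
      (((n.factorial : ℝ)⁻¹ * (y - t) ^ n) • iteratedDerivWithin (n + 1) f (Icc a b) t)
      (Ici t) t := by
    intro t ht
    have htab : t ∈ Icc a b := ⟨hy.1.trans ht.1, ht.2.le.trans hc.2⟩
    have hmem : Icc a b ∈ nhdsWithin t (Ici t) := by
      have h1 : Iio b ∈ nhds t := Iio_mem_nhds (lt_of_lt_of_le ht.2 hc.2)
      have h2 : Ici t ∩ Iio b ⊆ Icc a b := fun z hz =>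
        ⟨htab.1.trans hz.1, hz.2.le⟩
      exact Filter.mem_of_superset
        (Filter.inter_mem self_mem_nhdsWithin (mem_nhdsWithin_of_mem_nhds h1)) h2
    exact ((gderiv t htab).mono_of_mem_nhdsWithin hmem).sub_const _
  have hB : ∀ t : ℝ, HasDerivAt
      (fun t => M / (n + 1).factorial * (t - y) ^ (n + 1))
      (M / n.factorial * (t - y) ^ n) t := by
    intro t
    have h1 : HasDerivAt (fun z : ℝ => (z - y) ^ (n + 1))
        ((n + 1 : ℕ) * (t - y) ^ (n + 1 - 1) * 1) t :=
      ((hasDerivAt_id t).sub_const y).pow (n + 1)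
    have h2 := h1.const_mul (M / (n + 1).factorial)
    refine h2.congr_deriv ?_
    have : ((n + 1).factorial : ℝ) = (n + 1) * n.factorial := by
      push_cast [Nat.factorial_succ]; ring
    rw [this]
    have hn : (n.factorial : ℝ) ≠ 0 := Nat.cast_ne_zero.2 n.factorial_ne_zero
    simp only [Nat.add_sub_cancel, mul_one]
    push_cast
    field_simp
  have bound : ∀ t ∈ Ico y c,
      ‖((n.factorial : ℝ)⁻¹ * (y - t) ^ n) • iteratedDerivWithin (n + 1) f (Icc a b) t‖ ≤
        M / n.factorial * (t - y) ^ n := by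
    intro t ht
    have htab : t ∈ Icc a b := ⟨hy.1.trans ht.1, ht.2.le.trans hc.2⟩
    have hyt : (0:ℝ) ≤ t - y := sub_nonneg.2 ht.1
    rw [norm_smul, Real.norm_eq_abs, Real.norm_eq_abs, abs_mul, abs_pow, abs_sub_comm y t,
      abs_of_nonneg hyt, abs_of_nonneg (by positivity : (0:ℝ) ≤ (n.factorial : ℝ)⁻¹)]
    calc (n.factorial : ℝ)⁻¹ * (t - y) ^ n * |iteratedDerivWithin (n + 1) f (Icc a b) t|
        ≤ (n.factorial : ℝ)⁻¹ * (t - y) ^ n * M :=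
          mul_le_mul_of_nonneg_left (hM t htab) (by positivity)
      _ = M / n.factorial * (t - y) ^ n := by ring
  have Fa : ‖(fun t => g t - g y) y‖ ≤ M / (n + 1).factorial * (y - y) ^ (n + 1) := by simp
  have key := image_norm_le_of_norm_deriv_right_le_deriv_boundary Fcont Fderiv Fa hB bound
    (right_mem_Icc.2 hcy)
  simp only [hg, taylorWithinEval_self] at key
  rw [Real.norm_eq_abs, abs_sub_comm] at key
  exact key


lemma taylor_bound {f : ℝ → ℝ} {a b : ℝ} (hab : a < b) {n : ℕ}
    (hf : ContDiffOn ℝ (n + 1 : ℕ) f (Icc a b)) {M : ℝ}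
    (hM : ∀ t ∈ Icc a b, |iteratedDerivWithin (n + 1) f (Icc a b) t| ≤ M)
    {c y : ℝ} (hc : c ∈ Icc a b) (hy : y ∈ Icc a b) :
    |f y - taylorWithinEval f n (Icc a b) c y| ≤
      M / (n + 1).factorial * |y - c| ^ (n + 1) := by
  rcases le_total c y with hcy | hcy
  · rw [abs_of_nonneg (sub_nonneg.2 hcy)]
    exact taylor_bound_right hab hf hM hc hy hcy
  · rw [show |y - c| = c - y from by rw [abs_sub_comm]; exact abs_of_nonneg (sub_nonneg.2 hcy)]
    exact taylor_bound_left hab hf hM hc hy hcy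

/-- Error bound for an `(m+1)`-point finite-difference stencil for the `k`-th
derivative of a `C^{m+1}` function. -/
theorem stencil_error_bound
    (m k : ℕ) (hk : k ≤ m) (a b : ℝ)
    (x : Fin (m + 1) → ℝ) (hx : Function.Injective x) (hxI : ∀ j, x j ∈ Icc a b)
    (f : ℝ → ℝ) (hf : ContDiffOn ℝ (m + 1 : ℕ) f (Icc a b))
    (M : ℝ)
    (hM : ∀ t ∈ Icc a b, |iteratedDerivWithin (m + 1) f (Icc a b) t| ≤ M)
    (w : Fin (m + 1) → ℝ)
    (hw : ∀ r : Fin (m + 1), ∑ j, (x j - x 0) ^ (r : ℕ) * w j =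
      k.factorial * (if (r : ℕ) = k then 1 else 0))
    (h : ℝ)
    (hh : h = Finset.univ.sup' Finset.univ_nonempty fun j => |x j - x 0|) :
    |iteratedDerivWithin k f (Icc a b) (x 0) - ∑ j, w j * f (x j)| ≤
      (M / (Nat.factorial (m + 1))) * (∑ j, |w j|) * h ^ (m + 1) := by
  have hab' : a ≤ b := (hxI 0).1.trans (hxI 0).2
  rcases eq_or_lt_of_le hab' with heq | hab
  · -- degenerate interval: then m = 0, k = 0, both sides vanish
    subst heq
    have hxa : ∀ j, x j = a := fun j => by
      have := hxI j; rwa [Set.Icc_self, mem_singleton_iff] at this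
    have hm : m = 0 := by
      by_contra hm
      have h01 : (0 : Fin (m + 1)) ≠ 1 := by
        intro e
        have := congrArg Fin.val e
        rw [Fin.val_zero, Fin.val_one'] at this
        have : 1 % (m + 1) = 1 := Nat.mod_eq_of_lt (by omega)
        omega
      exact h01 (hx ((hxa 0).trans (hxa 1).symm))
    subst hm
    have hk0 : k = 0 := Nat.le_zero.1 hk
    subst hk0
    have hw0 : w 0 = 1 := by
      have := hw 0
      simpa using this
    have hh0 : h = 0 := by
      simp [hh, hxa]
    simp [hh0, hw0, hxa]
  · -- main case
    have hM0 : 0 ≤ M := le_trans (abs_nonneg _) (hM (x 0) (hxI 0))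
    have hhj : ∀ j, |x j - x 0| ≤ h := fun j => by
      rw [hh]; exact Finset.le_sup' (fun j => |x j - x 0|) (mem_univ j)
    have hh0 : 0 ≤ h := le_trans (abs_nonneg _) (hhj 0)
    set T : ℝ → ℝ := taylorWithinEval f m (Icc a b) (x 0) with hT
    have hR : ∀ j, |f (x j) - T (x j)| ≤ M / (m + 1).factorial * h ^ (m + 1) := by
      intro j
      calc |f (x j) - T (x j)| ≤ M / (m + 1).factorial * |x j - x 0| ^ (m + 1) :=
            taylor_bound hab hf hM (hxI 0) (hxI j)
        _ ≤ M / (m + 1).factorial * h ^ (m + 1) :=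
            mul_le_mul_of_nonneg_left (pow_le_pow_left₀ (abs_nonneg _) (hhj j) _)
              (by positivity)
    have hsumT : ∑ j, w j * T (x j) = iteratedDerivWithin k f (Icc a b) (x 0) := by
      have hTj : ∀ j, T (x j) = ∑ r ∈ Finset.range (m + 1),
          ((r.factorial : ℝ)⁻¹ * (x j - x 0) ^ r) *
            iteratedDerivWithin r f (Icc a b) (x 0) := fun j => by
        rw [hT, taylor_within_apply]; simp [smul_eq_mul]
      simp_rw [hTj, Finset.mul_sum]
      rw [Finset.sum_comm]
      have hrw : ∀ r ∈ Finset.range (m + 1),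
          (∑ j, w j * (((r.factorial : ℝ)⁻¹ * (x j - x 0) ^ r) *
            iteratedDerivWithin r f (Icc a b) (x 0))) =
          (if r = k then iteratedDerivWithin k f (Icc a b) (x 0) else 0) := by
        intro r hr
        have hwr := hw ⟨r, Finset.mem_range.1 hr⟩
        simp only [Fin.val_mk] at hwr
        have step : (∑ j, w j * (((r.factorial : ℝ)⁻¹ * (x j - x 0) ^ r) *
            iteratedDerivWithin r f (Icc a b) (x 0))) =
            (r.factorial : ℝ)⁻¹ * iteratedDerivWithin r f (Icc a b) (x 0) *
              ∑ j, (x j - x 0) ^ r * w j := by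
          rw [Finset.mul_sum]
          exact Finset.sum_congr rfl fun j _ => by ring
        rw [step, hwr]
        by_cases hrk : r = k
        · subst hrk
          simp only [if_pos rfl, mul_one]
          have : (r.factorial : ℝ) ≠ 0 := Nat.cast_ne_zero.2 r.factorial_ne_zero
          field_simp
          simp
        · simp [hrk]
      rw [Finset.sum_congr rfl hrw, Finset.sum_ite_eq' (Finset.range (m + 1)) k]
      simp [Finset.mem_range.2 (Nat.lt_succ_of_le hk)]
    have hdecomp : iteratedDerivWithin k f (Icc a b) (x 0) - ∑ j, w j * f (x j) =
        -∑ j, w j * (f (x j) - T (x j)) := by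
      rw [← hsumT, ← Finset.sum_neg_distrib, ← Finset.sum_sub_distrib]
      exact Finset.sum_congr rfl fun j _ => by ring
    rw [hdecomp, abs_neg]
    calc |∑ j, w j * (f (x j) - T (x j))| ≤ ∑ j, |w j * (f (x j) - T (x j))| :=
          Finset.abs_sum_le_sum_abs _ _
      _ = ∑ j, |w j| * |f (x j) - T (x j)| := by simp [abs_mul]
      _ ≤ ∑ j, |w j| * (M / (m + 1).factorial * h ^ (m + 1)) :=
          Finset.sum_le_sum fun j _ => mul_le_mul_of_nonneg_left (hR j) (abs_nonneg _)
      _ = (M / (Nat.factorial (m + 1))) * (∑ j, |w j|) * h ^ (m + 1) := by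
          rw [← Finset.sum_mul]; ring
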